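/- In a k-linear triangulated (or pretriangulated dg) category, the left mutation and right mutation of exceptional pairs are mutually inverse: if (E, F) is an exceptional pair, then applying the left mutation followed by the right mutation returns a pair isomorphic to (E, F). Concretely, R_{L_E F}(E) ≅ F, where L_E F = Cone(hom(E,F) ⊗ E → F) and R_G E = Cone(E → hom(E,G)^∨ ⊗ G). -/

import Mathlib

/- STATEMENT 11: In a k-linear (pre)triangulated category, left and right mutations of
exceptional pairs are mutually inverse: if (E, F) is an exceptional pair, the left
mutation gives the pair (L_E F, E), and right-mutating it back returns a pair isomorphic
to (E, F); i.e. the right mutation of the pair (L_E F, E) is isomorphic to F.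

Mutations are encoded by their standard characterization via distinguished triangles:
the left mutation G = L_E F of F over E sits in a distinguished triangle
T → F → G → T⟦1⟧ with T a finite direct sum of shifts of E (namely hom(E,F) ⊗ E) and
with G left-orthogonal to E (Hom(E, G⟦i⟧) = 0 for all i); the right mutation R of the
pair (G, E) sits in a distinguished triangle R → G → T' → R⟦1⟧ with T' a finite direct
sum of shifts of E (namely hom(G,E)^∨ ⊗ E) and Hom(R, E⟦i⟧) = 0 for all i.  The claim
is that R ≅ F. -/

open CategoryTheory Limits Pretriangulated

/-- `T` is a finite direct sum of shifts of `E` (the copower `hom(E,F) ⊗ E` for a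
perfect graded vector space `hom(E,F)` is of this form). -/
def IsSumOfShifts {C : Type*} [Category C] [HasShift C ℤ] [Preadditive C]
    [Limits.HasFiniteBiproducts C] (E T : C) : Prop :=
  ∃ (n : ℕ) (s : Fin n → ℤ), Nonempty (T ≅ ⨁ fun j : Fin n => E⟦s j⟧)

/- Both `F` and `R` map to `G` (by `β` and `α'`), and each map factors through the other:
`α'` through `β` because `Hom(R, T⟦1⟧) = 0`, and `β` through `α'` because `Hom(F, T') = 0`.
The two composites are endomorphisms over `G`, hence identities: postcomposition with `β` is
injective on maps out of `F` since `Hom(F, T) = 0`, and postcomposition with `α'` on maps out of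
`R` since `Hom(R, T'⟦-1⟧) = 0`. Each of these vanishings reduces, summand by summand, to
`Hom(F, E⟦i⟧) = 0` or `Hom(R, E⟦i⟧) = 0`. -/

section SumOfShifts

variable {C : Type*} [Category C] [Preadditive C] [HasShift C ℤ] [HasFiniteBiproducts C]

lemma IsSumOfShifts.hom_eq_zero {E T X : C} (hT : IsSumOfShifts E T)
    (hX : ∀ i : ℤ, ∀ f : X ⟶ E⟦i⟧, f = 0) (f : X ⟶ T) : f = 0 := by
  obtain ⟨n, s, ⟨e⟩⟩ := hT
  have hfe : f ≫ e.hom = 0 := biproduct.hom_ext _ _ fun j => by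
    rw [zero_comp, Category.assoc]
    exact hX (s j) _
  simpa using hfe =≫ e.inv

lemma IsSumOfShifts.shift [∀ n : ℤ, (shiftFunctor C n).Additive] {E T : C}
    (hT : IsSumOfShifts E T) (m : ℤ) : IsSumOfShifts E (T⟦m⟧) := by
  obtain ⟨n, s, ⟨e⟩⟩ := hT
  exact ⟨n, fun j => s j + m, ⟨(shiftFunctor C m).mapIso e ≪≫
    (shiftFunctor C m).mapBiproduct (fun j => E⟦s j⟧) ≪≫
    biproduct.mapIso fun j => ((shiftFunctorAdd C (s j) m).app E).symm⟩⟩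

end SumOfShifts

lemma CategoryTheory.Pretriangulated.cancel_mor₂_of_hom_obj₁_eq_zero
    {C : Type*} [Category C] [Preadditive C] [HasZeroObject C] [HasShift C ℤ]
    [∀ n : ℤ, (shiftFunctor C n).Additive] [Pretriangulated C]
    {T : Triangle C} (hT : T ∈ distTriang C) {X : C}
    (hX : ∀ g : X ⟶ T.obj₁, g = 0) {a b : X ⟶ T.obj₂}
    (h : a ≫ T.mor₂ = b ≫ T.mor₂) : a = b := by
  obtain ⟨g, hg⟩ :=
    Triangle.coyoneda_exact₂ T hT (a - b) (by rw [Preadditive.sub_comp, h, sub_self])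
  rw [hX g, zero_comp, sub_eq_zero] at hg
  exact hg

def isoOfMutualFactorization {C : Type*} [Category C] {X Y Z : C} {f : X ⟶ Z} {g : Y ⟶ Z}
    (φ : X ⟶ Y) (ψ : Y ⟶ X) (hφ : f = φ ≫ g) (hψ : g = ψ ≫ f)
    (hf : ∀ a : X ⟶ X, a ≫ f = f → a = 𝟙 X)
    (hg : ∀ b : Y ⟶ Y, b ≫ g = g → b = 𝟙 Y) :
    X ≅ Y where
  hom := φ
  inv := ψ
  hom_inv_id := hf _ (by rw [Category.assoc, ← hψ, ← hφ])
  inv_hom_id := hg _ (by rw [Category.assoc, ← hφ, ← hψ])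

theorem left_right_mutation_inverse
    {k : Type*} [Field k] {C : Type*} [Category C] [Preadditive C] [Linear k C]
    [HasZeroObject C] [HasShift C ℤ] [∀ n : ℤ, (shiftFunctor C n).Additive]
    [Pretriangulated C] [HasFiniteBiproducts C]
    (E F G T T' R : C)
    -- `E` is exceptional: hom(E,E) ≃ k
    (hE0 : ∀ f : E ⟶ E, ∃ c : k, f = c • 𝟙 E)
    (hE1 : ∀ i : ℤ, i ≠ 0 → ∀ f : E ⟶ E⟦i⟧, f = 0)
    -- `F` is exceptional: hom(F,F) ≃ k
    (hF0 : ∀ f : F ⟶ F, ∃ c : k, f = c • 𝟙 F)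
    (hF1 : ∀ i : ℤ, i ≠ 0 → ∀ f : F ⟶ F⟦i⟧, f = 0)
    -- (E, F) is an exceptional pair: hom(F,E) ≃ 0
    (hpair : ∀ i : ℤ, ∀ f : F ⟶ E⟦i⟧, f = 0)
    -- G = L_E F: distinguished triangle hom(E,F) ⊗ E → F → G → ⟦1⟧ with G ⊥ E
    (hT : IsSumOfShifts E T)
    (α : T ⟶ F) (β : F ⟶ G) (γ : G ⟶ T⟦(1 : ℤ)⟧)
    (hdist : Triangle.mk α β γ ∈ distTriang C)
    (hGorth : ∀ i : ℤ, ∀ f : E ⟶ G⟦i⟧, f = 0)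
    -- R = right mutation of the pair (G, E): distinguished triangle
    -- R → G → hom(G,E)^∨ ⊗ E → R⟦1⟧ with Hom(R, E⟦i⟧) = 0
    (hT' : IsSumOfShifts E T')
    (α' : R ⟶ G) (β' : G ⟶ T') (γ' : T' ⟶ R⟦(1 : ℤ)⟧)
    (hdist' : Triangle.mk α' β' γ' ∈ distTriang C)
    (hRorth : ∀ i : ℤ, ∀ f : R ⟶ E⟦i⟧, f = 0) :
    Nonempty (R ≅ F) := by
  obtain ⟨φ, hφ⟩ : ∃ φ : R ⟶ F, α' = φ ≫ β :=
    Triangle.coyoneda_exact₃ _ hdist α' ((hT.shift 1).hom_eq_zero hRorth _)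
  obtain ⟨ψ, hψ⟩ : ∃ ψ : F ⟶ R, β = ψ ≫ α' :=
    Triangle.coyoneda_exact₂ _ hdist' β (hT'.hom_eq_zero hpair _)
  have hα' (a : R ⟶ R) (ha : a ≫ α' = α') : a = 𝟙 R :=
    cancel_mor₂_of_hom_obj₁_eq_zero (inv_rot_of_distTriang _ hdist')
      ((hT'.shift (-1)).hom_eq_zero hRorth) (ha.trans (Category.id_comp α').symm)
  have hβ (b : F ⟶ F) (hb : b ≫ β = β) : b = 𝟙 F :=
    cancel_mor₂_of_hom_obj₁_eq_zero hdist (hT.hom_eq_zero hpair)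
      (hb.trans (Category.id_comp β).symm)
  exact ⟨isoOfMutualFactorization φ ψ hφ hψ hα' hβ⟩
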